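/- arXiv:1807.00105 — 7 statements merged into one kernel-verified Lean document; each statement's English description precedes it below -/
import Mathlib

section
/- Let r_1,...,r_d be positive integers, L = lcm(r_1,...,r_d), s_i = L/r_i, and let x be an R-multiplicity of r (i.e., L divides 1 + sum_i x_i r_i). Then there exist integers c_1,...,c_d and ρ_1,...,ρ_d with x_i = c_i s_i + ρ_i for all i, sum_i ρ_i r_i = -1, and each ρ_i satisfying -s_i ≤ ρ_i ≤ s_i - 1 (in fact ρ_i ∈ {0,...,s_i-1} or ρ_i ∈ {-s_i,...,-1}). -/
/-!
Reduce each `x i` modulo `s i` to `q i ∈ [0, s i)`. Since `s i * r i = L`, the sum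
`S = ∑ q i * r i` is still `≡ -1 [ZMOD L]`, and `0 ≤ S < d * L` because every term is below `L`;
hence `S + 1 = m * L` with `1 ≤ m ≤ d`. Replacing `q i` by `q i - s i` for `m` of the indices
lowers `S` by exactly `m * L`, giving remainders with `∑ ρ i * r i = -1`.
-/

open Finset

section BalancedRemainders

variable {ι : Type*} [Fintype ι] {L : ℤ} {r s : ι → ℤ}

lemma dvd_sum_emod_mul_add_one (hsr : ∀ i, s i * r i = L) (x : ι → ℤ)
    (hdiv : L ∣ 1 + ∑ i, x i * r i) :
    L ∣ ∑ i, x i % s i * r i + 1 := by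
  have hterm (i : ι) : x i % s i * r i = x i * r i - L * (x i / s i) := by
    rw [Int.emod_def, ← hsr i]; ring
  have hsum : ∑ i, x i % s i * r i + 1 = (1 + ∑ i, x i * r i) - L * ∑ i, x i / s i := by
    simp only [hterm, sum_sub_distrib, ← mul_sum]; ring
  rw [hsum]
  exact dvd_sub hdiv (dvd_mul_right L _)

lemma sum_emod_mul_nonneg (hr : ∀ i, 0 < r i) (hs : ∀ i, 0 < s i) (x : ι → ℤ) :
    0 ≤ ∑ i, x i % s i * r i :=
  sum_nonneg fun i _ => mul_nonneg (Int.emod_nonneg _ (hs i).ne') (hr i).le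

lemma sum_emod_mul_lt_card_mul [Nonempty ι] (hr : ∀ i, 0 < r i) (hs : ∀ i, 0 < s i)
    (hsr : ∀ i, s i * r i = L) (x : ι → ℤ) :
    ∑ i, x i % s i * r i < Fintype.card ι * L := by
  calc ∑ i, x i % s i * r i < ∑ _i : ι, L :=
        sum_lt_sum_of_nonempty univ_nonempty fun i _ =>
          hsr i ▸ mul_lt_mul_of_pos_right (Int.emod_lt_of_pos _ (hs i)) (hr i)
    _ = Fintype.card ι * L := by simp

lemma sum_sub_ite_mem_mul [DecidableEq ι] (hsr : ∀ i, s i * r i = L) (q : ι → ℤ)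
    (T : Finset ι) :
    ∑ i, (q i - if i ∈ T then s i else 0) * r i = ∑ i, q i * r i - #T * L := by
  simp only [sub_mul, sum_sub_distrib, ite_mul, zero_mul, sum_ite_mem, univ_inter, hsr,
    sum_const, nsmul_eq_mul]

theorem exists_balanced_remainders [Nonempty ι] (hr : ∀ i, 0 < r i) (hs : ∀ i, 0 < s i)
    (hsr : ∀ i, s i * r i = L) (x : ι → ℤ) (hdiv : L ∣ 1 + ∑ i, x i * r i) :
    ∃ c ρ : ι → ℤ, (∀ i, x i = c i * s i + ρ i) ∧ ∑ i, ρ i * r i = -1 ∧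
      ∀ i, (0 ≤ ρ i ∧ ρ i ≤ s i - 1) ∨ (-s i ≤ ρ i ∧ ρ i ≤ -1) := by
  classical
  obtain ⟨m, hm⟩ := dvd_sum_emod_mul_add_one hsr x hdiv
  have hL : 0 < L := Nonempty.elim ‹_› fun i => hsr i ▸ mul_pos (hs i) (hr i)
  have hS₀ := sum_emod_mul_nonneg hr hs x
  have hS₁ := sum_emod_mul_lt_card_mul hr hs hsr x
  have hm₀ : 0 ≤ m := by nlinarith
  lift m to ℕ using hm₀
  have hm_card : m ≤ #(univ : Finset ι) := by
    have : (m : ℤ) ≤ Fintype.card ι := by nlinarith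
    rw [card_univ]
    exact_mod_cast this
  obtain ⟨T, -, hT⟩ := exists_subset_card_eq hm_card
  refine ⟨fun i => x i / s i + if i ∈ T then 1 else 0,
    fun i => x i % s i - if i ∈ T then s i else 0, fun i => ?_, ?_, fun i => ?_⟩
  · dsimp only
    rw [Int.emod_def]
    split_ifs <;> ring
  · rw [sum_sub_ite_mem_mul hsr, hT]
    linarith
  · have := Int.emod_nonneg (x i) (hs i).ne'
    have := Int.emod_lt_of_pos (x i) (hs i)
    dsimp only
    split_ifs
    · right; constructor <;> linarith
    · left; constructor <;> linarith

end BalancedRemainders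

theorem stmt_3_general (d : ℕ) (hd : 0 < d) (r x : Fin d → ℕ)
    (hr : ∀ i, 0 < r i)
    (hdiv : Finset.univ.lcm r ∣ 1 + ∑ i, x i * r i) :
    ∃ (c ρ : Fin d → ℤ),
      (∀ i, (x i : ℤ) = c i * ((Finset.univ.lcm r / r i : ℕ) : ℤ) + ρ i) ∧
      (∑ i, ρ i * (r i : ℤ)) = -1 ∧
      (∀ i, (0 ≤ ρ i ∧ ρ i ≤ ((Finset.univ.lcm r / r i : ℕ) : ℤ) - 1) ∨
            (-((Finset.univ.lcm r / r i : ℕ) : ℤ) ≤ ρ i ∧ ρ i ≤ -1)) := by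
  have : Nonempty (Fin d) := ⟨⟨0, hd⟩⟩
  have hrL : ∀ i, r i ∣ univ.lcm r := fun i => dvd_lcm (mem_univ i)
  have hL : 0 < univ.lcm r := Nat.pos_of_dvd_of_pos hdiv (by omega)
  exact exists_balanced_remainders (L := ((univ.lcm r : ℕ) : ℤ))
    (fun i => by exact_mod_cast hr i)
    (fun i => by exact_mod_cast Nat.div_pos (Nat.le_of_dvd hL (hrL i)) (hr i))
    (fun i => by exact_mod_cast Nat.div_mul_cancel (hrL i)) (fun i => (x i : ℤ))
    (by exact_mod_cast hdiv)

theorem stmt_3 (d : ℕ) (hd : 0 < d) (r x : Fin d → ℕ)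
    (hr : ∀ i, 0 < r i) (hx : ∀ i, 0 < x i)
    (hdiv : Finset.univ.lcm r ∣ 1 + ∑ i, x i * r i) :
    ∃ (c ρ : Fin d → ℤ),
      (∀ i, (x i : ℤ) = c i * ((Finset.univ.lcm r / r i : ℕ) : ℤ) + ρ i) ∧
      (∑ i, ρ i * (r i : ℤ)) = -1 ∧
      (∀ i, (0 ≤ ρ i ∧ ρ i ≤ ((Finset.univ.lcm r / r i : ℕ) : ℤ) - 1) ∨
            (-((Finset.univ.lcm r / r i : ℕ) : ℤ) ≤ ρ i ∧ ρ i ≤ -1)) :=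
  stmt_3_general d hd r x hr hdiv
end

section
/- Let a ≥ 2, k ≥ 1, c ≥ 1 be integers. Define the map φ from {0,...,ka-2} × {0,...,a-1} to itself sending (i_1, i_2) to (j_1, j_2) where j_1 = floor(((ka-1)·i_2 + i_1)/a) and j_2 = (ka-1)·i_2 + i_1 - a·j_1. Then φ is a bijection and for all (i_1, i_2) in the domain, c·i_1 + ((ka-1)c - k)·i_2 - floor((i_1 - i_2)/a) = (ac - 1)·j_1 + c·j_2. -/
/-!
Put `n = (ka - 1) i₂ + i₁`. As `(i₁, i₂)` runs over the box, `(i₂, i₁)` are the two base-`(ka - 1)`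
digits of `n`, so `n` runs over `[0, a (ka - 1))` exactly once; `(j₁, j₂)` are the quotient and
remainder of the same `n` by `a`, which is again a bijection onto the box. For the identity, write
`n = (i₁ - i₂) + (k i₂) a`, so that `j₁ = ⌊(i₁ - i₂) / a⌋ + k i₂`; what remains is a polynomial
identity.
-/

open Set

namespace Int

variable {b n : ℤ}

lemma mapsTo_ediv_emod (hb : 0 < b) :
    MapsTo (fun x : ℤ => (x / b, x % b)) (Ico 0 (b * n)) (Ico 0 n ×ˢ Ico 0 b) := by
  rintro x ⟨hx0, hxn⟩
  refine ⟨⟨ediv_nonneg hx0 hb.le, (Int.ediv_lt_iff_lt_mul hb).2 (by linarith)⟩,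
    emod_nonneg x hb.ne', emod_lt_of_pos x hb⟩

lemma mapsTo_mul_add :
    MapsTo (fun p : ℤ × ℤ => b * p.1 + p.2) (Ico 0 n ×ˢ Ico 0 b) (Ico 0 (b * n)) := by
  rintro ⟨q, r⟩ ⟨⟨hq0, hqn⟩, hr0, hrb⟩
  constructor <;> dsimp only <;> nlinarith

lemma invOn_mul_add_ediv_emod :
    InvOn (fun p : ℤ × ℤ => b * p.1 + p.2) (fun x : ℤ => (x / b, x % b))
      (Ico 0 (b * n)) (Ico 0 n ×ˢ Ico 0 b) := by
  refine ⟨fun x _ => Int.mul_ediv_add_emod x b, ?_⟩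
  rintro ⟨q, r⟩ ⟨-, hr0, hrb⟩
  have hb : b ≠ 0 := by omega
  simp only [Prod.mk.injEq]
  constructor
  · rw [add_comm, add_mul_ediv_left _ _ hb, ediv_eq_zero_of_lt hr0 hrb, zero_add]
  · rw [add_comm, add_mul_emod_self_left, emod_eq_of_lt hr0 hrb]

lemma bijOn_ediv_emod (hb : 0 < b) :
    BijOn (fun x : ℤ => (x / b, x % b)) (Ico 0 (b * n)) (Ico 0 n ×ˢ Ico 0 b) :=
  invOn_mul_add_ediv_emod.bijOn (mapsTo_ediv_emod hb) mapsTo_mul_add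

lemma bijOn_mul_add (hb : 0 < b) :
    BijOn (fun p : ℤ × ℤ => b * p.1 + p.2) (Ico 0 n ×ˢ Ico 0 b) (Ico 0 (b * n)) :=
  (bijOn_ediv_emod hb).symm invOn_mul_add_ediv_emod.symm

lemma mul_sub_one_mul_add_ediv {a : ℤ} (ha : a ≠ 0) (k x y : ℤ) :
    ((k * a - 1) * y + x) / a = (x - y) / a + k * y := by
  rw [show (k * a - 1) * y + x = (x - y) + k * y * a by ring, add_mul_ediv_right _ _ ha]

end Int

lemma Set.bijOn_swap_prod {α β : Type*} (s : Set α) (t : Set β) :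
    BijOn Prod.swap (s ×ˢ t) (t ×ˢ s) := by
  simpa only [image_swap_prod] using (Prod.swap_injective.injOn (s := s ×ˢ t)).bijOn_image

theorem stmt_9_general (a k c : ℤ) (ha : 2 ≤ a) (hk : 1 ≤ k) :
    Set.BijOn
      (fun p : ℤ × ℤ =>
        (Int.ediv ((k * a - 1) * p.2 + p.1) a,
         (k * a - 1) * p.2 + p.1 - a * Int.ediv ((k * a - 1) * p.2 + p.1) a))
      {p : ℤ × ℤ | 0 ≤ p.1 ∧ p.1 ≤ k * a - 2 ∧ 0 ≤ p.2 ∧ p.2 ≤ a - 1}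
      {p : ℤ × ℤ | 0 ≤ p.1 ∧ p.1 ≤ k * a - 2 ∧ 0 ≤ p.2 ∧ p.2 ≤ a - 1} ∧
    ∀ p : ℤ × ℤ, p ∈ {p : ℤ × ℤ | 0 ≤ p.1 ∧ p.1 ≤ k * a - 2 ∧ 0 ≤ p.2 ∧ p.2 ≤ a - 1} →
      c * p.1 + ((k * a - 1) * c - k) * p.2 - Int.ediv (p.1 - p.2) a =
        (a * c - 1) * Int.ediv ((k * a - 1) * p.2 + p.1) a +
          c * ((k * a - 1) * p.2 + p.1 - a * Int.ediv ((k * a - 1) * p.2 + p.1) a) := by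
  have ha0 : 0 < a := by omega
  have hm : 0 < k * a - 1 := by nlinarith
  have hbox : {p : ℤ × ℤ | 0 ≤ p.1 ∧ p.1 ≤ k * a - 2 ∧ 0 ≤ p.2 ∧ p.2 ≤ a - 1} =
      Ico 0 (k * a - 1) ×ˢ Ico 0 a := by
    ext p; simp only [mem_ofPred_eq, mem_prod, mem_Ico]; omega
  refine ⟨?_, fun p _ => ?_⟩
  · have hdigits := (Int.bijOn_mul_add hm).comp (bijOn_swap_prod (Ico 0 (k * a - 1)) (Ico 0 a))
    rw [mul_comm (k * a - 1) a] at hdigits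
    rw [hbox]
    convert (Int.bijOn_ediv_emod ha0).comp hdigits using 2 with p
    exact Prod.ext rfl (Int.emod_def _ _).symm
  · change _ - (p.1 - p.2) / a = (a * c - 1) * (((k * a - 1) * p.2 + p.1) / a) +
      c * ((k * a - 1) * p.2 + p.1 - a * (((k * a - 1) * p.2 + p.1) / a))
    rw [Int.mul_sub_one_mul_add_ediv ha0.ne']
    ring

theorem stmt_9 (a k c : ℤ) (ha : 2 ≤ a) (hk : 1 ≤ k) (hc : 1 ≤ c) :
    Set.BijOn
      (fun p : ℤ × ℤ =>
        (Int.ediv ((k * a - 1) * p.2 + p.1) a,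
         (k * a - 1) * p.2 + p.1 - a * Int.ediv ((k * a - 1) * p.2 + p.1) a))
      {p : ℤ × ℤ | 0 ≤ p.1 ∧ p.1 ≤ k * a - 2 ∧ 0 ≤ p.2 ∧ p.2 ≤ a - 1}
      {p : ℤ × ℤ | 0 ≤ p.1 ∧ p.1 ≤ k * a - 2 ∧ 0 ≤ p.2 ∧ p.2 ≤ a - 1} ∧
    ∀ p : ℤ × ℤ, p ∈ {p : ℤ × ℤ | 0 ≤ p.1 ∧ p.1 ≤ k * a - 2 ∧ 0 ≤ p.2 ∧ p.2 ≤ a - 1} →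
      c * p.1 + ((k * a - 1) * c - k) * p.2 - Int.ediv (p.1 - p.2) a =
        (a * c - 1) * Int.ediv ((k * a - 1) * p.2 + p.1) a +
          c * ((k * a - 1) * p.2 + p.1 - a * Int.ediv ((k * a - 1) * p.2 + p.1) a) :=
  stmt_9_general a k c ha hk
end

section
/- Let a ≥ 2, k ≥ 1, c ≥ 1 be integers. Then the sum over all pairs (i_1, i_2) with 0 ≤ i_1 ≤ ka-2 and 0 ≤ i_2 ≤ a-1 of z^{c·i_1 + ((ka-1)c-k)·i_2 - floor((i_1-i_2)/a)} equals (sum_{j_1=0}^{ka-2} z^{(ac-1)·j_1})·(sum_{j_2=0}^{a-1} z^{c·j_2}) as polynomials in z. -/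
open Finset LaurentPolynomial

/-! Both sides equal `∑_{0 ≤ N < a(ka-1)} z^(cN - ⌊N/a⌋)`: on the left write
`N = i₁ + (ka-1) i₂` in base `ka-1`, on the right `N = j₂ + a j₁` in base `a`. -/

theorem Int.sum_Icc_product_Icc_add_mul {M : Type*} [AddCommMonoid M] (f : ℤ → M) {b : ℤ}
    (hb : 0 < b) (n : ℤ) :
    ∑ p ∈ Icc 0 (b - 1) ×ˢ Icc 0 (n - 1), f (p.1 + b * p.2) =
      ∑ N ∈ Icc 0 (b * n - 1), f N := by
  refine sum_nbij' (fun p => p.1 + b * p.2) (fun N => (N % b, N / b)) ?_ ?_ ?_ ?_ fun _ _ => rfl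
  · rintro ⟨r, q⟩ h
    simp only [mem_product, mem_Icc] at h ⊢
    constructor <;> nlinarith
  · intro N h
    simp only [mem_product, mem_Icc] at h ⊢
    refine ⟨⟨Int.emod_nonneg _ hb.ne', by linarith [Int.emod_lt_of_pos N hb]⟩,
      Int.ediv_nonneg h.1 hb.le, ?_⟩
    linarith [(Int.ediv_lt_iff_lt_mul hb).2 (by linarith : N < n * b)]
  · rintro ⟨r, q⟩ h
    simp only [mem_product, mem_Icc] at h
    have hr : r < b := by linarith
    simp only [Int.add_mul_emod_self_left, Int.add_mul_ediv_left _ _ hb.ne',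
      Int.emod_eq_of_lt h.1.1 hr, Int.ediv_eq_zero_of_lt h.1.1 hr, zero_add]
  · intro N _
    exact Int.emod_add_mul_ediv N b

theorem stmt_10_general (a k c : ℤ) (ha : 2 ≤ a) (hk : 1 ≤ k) :
    (∑ p ∈ Finset.Icc (0 : ℤ) (k * a - 2) ×ˢ Finset.Icc (0 : ℤ) (a - 1),
        (T (c * p.1 + ((k * a - 1) * c - k) * p.2 - Int.ediv (p.1 - p.2) a) :
          LaurentPolynomial ℤ)) =
      (∑ j₁ ∈ Finset.Icc (0 : ℤ) (k * a - 2), T ((a * c - 1) * j₁)) *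
        (∑ j₂ ∈ Finset.Icc (0 : ℤ) (a - 1), T (c * j₂)) := by
  have ha₀ : 0 < a := by omega
  have hb : 0 < k * a - 1 := by nlinarith
  have hka : k * a - 2 = (k * a - 1) - 1 := by ring
  let e : ℤ → ℤ := fun N => c * N - N / a
  have hL : ∀ p ∈ Icc 0 (k * a - 2) ×ˢ Icc 0 (a - 1),
      c * p.1 + ((k * a - 1) * c - k) * p.2 - Int.ediv (p.1 - p.2) a
        = e (p.1 + (k * a - 1) * p.2) := by
    intro p _
    have : p.1 + (k * a - 1) * p.2 = (p.1 - p.2) + k * p.2 * a := by ring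
    simp only [e, this, Int.add_mul_ediv_right _ _ ha₀.ne']
    change _ - (p.1 - p.2) / a = _
    ring
  have hR : ∀ p ∈ Icc 0 (a - 1) ×ˢ Icc 0 (k * a - 2),
      (T ((a * c - 1) * p.2) * T (c * p.1) : LaurentPolynomial ℤ) = T (e (p.1 + a * p.2)) := by
    rintro ⟨j₂, j₁⟩ h
    simp only [mem_product, mem_Icc] at h
    rw [← T_add]
    have hj₂ : j₂ < a := by linarith
    simp only [e, Int.add_mul_ediv_left _ _ ha₀.ne', Int.ediv_eq_zero_of_lt h.1.1 hj₂]
    congr 1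
    ring
  rw [sum_congr rfl fun p hp => congrArg T (hL p hp), sum_mul_sum, sum_comm, ← sum_product',
    sum_congr rfl hR, hka, Int.sum_Icc_product_Icc_add_mul (fun N => T (e N)) hb,
    Int.sum_Icc_product_Icc_add_mul (fun N => T (e N)) ha₀, mul_comm]

open LaurentPolynomial in
theorem stmt_10 (a k c : ℤ) (ha : 2 ≤ a) (hk : 1 ≤ k) (hc : 1 ≤ c) :
    (∑ p ∈ Finset.Icc (0 : ℤ) (k * a - 2) ×ˢ Finset.Icc (0 : ℤ) (a - 1),
        (T (c * p.1 + ((k * a - 1) * c - k) * p.2 - Int.ediv (p.1 - p.2) a) :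
          LaurentPolynomial ℤ)) =
      (∑ j₁ ∈ Finset.Icc (0 : ℤ) (k * a - 2), T ((a * c - 1) * j₁)) *
        (∑ j₂ ∈ Finset.Icc (0 : ℤ) (a - 1), T (c * j₂)) :=
  stmt_10_general a k c ha hk
end

section
/- For integers a ≥ 2 and c ≥ 1, the sum over pairs (i_1, i_2) with 0 ≤ i_2 ≤ i_1 ≤ a-2 of z^{c(i_1+i_2)} equals (sum_{j=0}^{2·floor((a-1)/2)} z^{cj})·(sum_{j=0}^{ceil((a-1)/2)-1} z^{2cj}). -/
/-!
With `x = T c`, multiply both sides by `(x - 1) * (x ^ 2 - 1)`. Row `i` of the triangle is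
`x ^ i` times a geometric sum, and summing rows gives `(x ^ (a - 1) - 1) * (x ^ a - 1)`. The two
factors on the right are geometric sums in `x` and `x ^ 2` and become
`(x ^ (2 ⌊(a - 1) / 2⌋ + 1) - 1) * (x ^ (2 ⌊a / 2⌋) - 1)`, whose exponents are `a - 1` and `a` in
some order. As `c ≠ 0`, the factor `(x - 1) * (x ^ 2 - 1)` is nonzero and cancels in `ℤ[T;T⁻¹]`.
-/

open LaurentPolynomial Finset

lemma Int.sum_Icc_succ_top {M : Type*} [AddCommMonoid M] (f : ℤ → M) {a b : ℤ}
    (h : a ≤ b + 1) : ∑ j ∈ Icc a (b + 1), f j = ∑ j ∈ Icc a b, f j + f (b + 1) := by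
  rw [← insert_Icc_right_eq_Icc_add_one h, sum_insert (by simp), add_comm]

namespace LaurentPolynomial

variable {R : Type*} [CommRing R]

lemma T_sub_one_ne_zero [Nontrivial R] {n : ℤ} (hn : n ≠ 0) : (T n - 1 : R[T;T⁻¹]) ≠ 0 := by
  intro h
  have := congrArg (fun f : R[T;T⁻¹] => f.coeff n) h
  simp [← T_zero, Ne.symm hn] at this

lemma geom_sum_T_mul (d : ℤ) {n : ℤ} (hn : -1 ≤ n) :
    (∑ j ∈ Icc 0 n, (T (d * j) : R[T;T⁻¹])) * (T d - 1) = T (d * (n + 1)) - 1 := by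
  induction n, hn using Int.leInduction with
  | base => simp
  | succ n hn ih =>
    rw [Int.sum_Icc_succ_top _ (by omega), add_mul, ih, mul_sub, ← T_add]
    ring_nf

lemma triangle_sum_T_mul (c : ℤ) {n : ℤ} (hn : -1 ≤ n) :
    (∑ i ∈ Icc 0 n, ∑ j ∈ Icc 0 i, (T (c * (i + j)) : R[T;T⁻¹])) *
        ((T c - 1) * (T (2 * c) - 1)) =
      (T (c * (n + 1)) - 1) * (T (c * (n + 2)) - 1) := by
  induction n, hn using Int.leInduction with
  | base => simp
  | succ n hn ih =>
    have row : (∑ j ∈ Icc 0 (n + 1), (T (c * (n + 1 + j)) : R[T;T⁻¹])) * (T c - 1)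
        = T (c * (n + 1)) * (T (c * (n + 2)) - 1) := by
      simp only [mul_add c (n + 1), T_add (c * (n + 1))]
      rw [← mul_sum, mul_assoc, geom_sum_T_mul c (by omega), add_assoc, one_add_one_eq_two]
    have shift : (T (c * (n + 1)) * T (2 * c) : R[T;T⁻¹]) = T (c * (n + 1 + 2)) := by
      rw [← T_add]
      ring_nf
    rw [Int.sum_Icc_succ_top _ (by omega), add_mul, ih, ← mul_assoc, row, add_assoc n,
      one_add_one_eq_two]
    linear_combination (T (c * (n + 2)) - 1 : R[T;T⁻¹]) * shift

lemma T_sub_one_mul_T_sub_one_parity (c a : ℤ) :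
    (T (c * (2 * ((a - 1) / 2) + 1)) - 1) * (T (2 * c * (a / 2)) - 1)
      = (T (c * (a - 1)) - 1) * (T (c * a) - 1 : R[T;T⁻¹]) := by
  rcases Int.even_or_odd' a with ⟨k, rfl | rfl⟩
  · rw [show (2 * k - 1) / 2 = k - 1 by omega, show 2 * k / 2 = k by omega]
    ring_nf
  · rw [show (2 * k + 1 - 1) / 2 = k by omega, show (2 * k + 1) / 2 = k by omega]
    ring_nf

end LaurentPolynomial

open LaurentPolynomial in
theorem stmt_11 (a c : ℤ) (ha : 2 ≤ a) (hc : 1 ≤ c) :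
    (∑ p ∈ (Finset.Icc (0 : ℤ) (a - 2) ×ˢ Finset.Icc (0 : ℤ) (a - 2)).filter
        (fun p => p.2 ≤ p.1),
        (T (c * (p.1 + p.2)) : LaurentPolynomial ℤ)) =
      (∑ j ∈ Finset.Icc (0 : ℤ) (2 * Int.ediv (a - 1) 2), T (c * j)) *
        (∑ j ∈ Finset.Icc (0 : ℤ) (Int.ediv a 2 - 1), T (2 * c * j)) := by
  have triangle : ∀ p : ℤ × ℤ, p ∈ (Icc 0 (a - 2) ×ˢ Icc 0 (a - 2)).filter (fun p => p.2 ≤ p.1)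
      ↔ p.1 ∈ Icc 0 (a - 2) ∧ p.2 ∈ Icc 0 p.1 := by
    simp only [mem_filter, mem_product, mem_Icc]
    omega
  simp only [← Int.div_def]
  refine mul_right_cancel₀ (mul_ne_zero (T_sub_one_ne_zero (n := c) (by omega))
    (T_sub_one_ne_zero (n := 2 * c) (by omega))) ?_
  rw [sum_finset_product _ _ _ triangle, triangle_sum_T_mul c (by omega : -1 ≤ a - 2),
    mul_mul_mul_comm, geom_sum_T_mul c (by omega), geom_sum_T_mul (2 * c) (by omega),
    sub_add_cancel, sub_add_cancel, T_sub_one_mul_T_sub_one_parity]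
  ring_nf
end

section
/- Let a ≥ 2 and c ≥ 1 be integers. The sum over all pairs (i_1, i_2) with 0 ≤ i_1 ≤ a-2 and 0 ≤ i_2 ≤ a-1 of z^{c(i_1+i_2) - floor((i_1-i_2)/a)} equals (1 + z^{c+1})·(sum_{j=0}^{2·floor((a-1)/2)} z^{cj})·(sum_{j=0}^{ceil((a-1)/2)-1} z^{2cj}). -/
/-! Write `x = T c`. The rectangle `[0, a-2] × [0, a-1]` is the disjoint union of the triangle
`i₂ ≤ i₁`, where the floor term vanishes, and the part `i₁ < i₂`, where it is `-1`; the
reindexing `(i₁, i₂) = (v, u + 1)` maps the triangle onto the latter and multiplies each monomial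
by `T (c + 1)`. What remains is the triangle sum `∑_{v ≤ u < a-1} x^(u+v)`, which factors as
claimed by induction on the number of rows, two rows at a time. -/

open Finset LaurentPolynomial

theorem Int.sub_ediv_eq_ite {a i j : ℤ} (hi : 0 ≤ i) (hia : i < a) (hj : 0 ≤ j) (hja : j < a) :
    (i - j) / a = if i < j then -1 else 0 := by
  split_ifs with hij
  · rw [Int.ediv_eq_iff_of_pos (by omega)]; omega
  · exact Int.ediv_eq_zero_of_lt (by omega) (by omega)

theorem Finset.sum_Icc_zero_natCast {M : Type*} [AddCommMonoid M] (N : ℕ) (f : ℤ → M) :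
    ∑ j ∈ Icc (0 : ℤ) N, f j = ∑ k ∈ range (N + 1), f k := by
  simp [Int.Icc_eq_finset_map, sum_map]

theorem Finset.sum_Icc_product_Icc_add_one {M : Type*} [AddCommMonoid M] (n : ℤ) (f : ℤ × ℤ → M) :
    ∑ p ∈ Icc 0 n ×ˢ Icc 0 (n + 1), f p =
      ∑ u ∈ Icc 0 n, ∑ v ∈ Icc 0 u, (f (u, v) + f (v, u + 1)) := by
  have hrow : ∀ u ∈ Icc 0 n, ∑ v ∈ Icc 0 (n + 1), f (u, v) =
      ∑ v ∈ Icc 0 u, f (u, v) + ∑ v ∈ Icc u n, f (u, v + 1) := by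
    intro u hu
    rw [mem_Icc] at hu
    have hsplit : Icc 0 (n + 1) = Icc 0 u ∪ (Icc u n).map (addRightEmbedding 1) := by
      ext v; simp only [mem_union, mem_Icc, map_add_right_Icc]; omega
    rw [hsplit, sum_union, sum_map]
    · rfl
    · rw [map_add_right_Icc, disjoint_left]
      intro v; simp only [mem_Icc]; omega
  rw [sum_product, sum_congr rfl hrow, sum_add_distrib,
    sum_comm' (t := fun u => Icc u n) (t' := Icc 0 n) (s' := fun v => Icc 0 v)
      (by intro u v; simp only [mem_Icc]; omega)]
  simp only [sum_add_distrib]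

theorem sum_range_two_mul_pow {R : Type*} [CommSemiring R] (x : R) (n : ℕ) :
    ∑ j ∈ range (2 * n), x ^ j = (1 + x) * ∑ k ∈ range n, (x ^ 2) ^ k := by
  induction n with
  | zero => simp
  | succ n ih =>
    rw [mul_add_one, sum_range_succ, sum_range_succ, ih, sum_range_succ, mul_add, ← pow_mul]
    ring

theorem sum_range_pow_mul_sum_range_succ_pow {R : Type*} [CommSemiring R] (x : R) (m : ℕ) :
    ∑ u ∈ range m, x ^ u * ∑ v ∈ range (u + 1), x ^ v =
      (∑ j ∈ range (2 * (m / 2) + 1), x ^ j) * ∑ k ∈ range ((m + 1) / 2), (x ^ 2) ^ k := by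
  have heven : ∀ n, ∑ u ∈ range (2 * n), x ^ u * ∑ v ∈ range (u + 1), x ^ v =
      (∑ j ∈ range (2 * n + 1), x ^ j) * ∑ k ∈ range n, (x ^ 2) ^ k := by
    intro n
    induction n with
    | zero => simp
    | succ n ih =>
      rw [mul_add_one, sum_range_succ, sum_range_succ, ih,
        show 2 * n + 1 + 1 = 2 * (n + 1) by ring, sum_range_two_mul_pow,
        sum_range_succ (fun k => (x ^ 2) ^ k), show 2 * (n + 1) + 1 = 2 * n + 1 + 1 + 1 by ring,
        sum_range_succ (fun j => x ^ j) (2 * n + 1 + 1),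
        sum_range_succ (fun j => x ^ j) (2 * n + 1), ← pow_mul]
      ring
  obtain ⟨n, rfl | rfl⟩ := Nat.even_or_odd' m
  · rw [heven, show (2 * n + 1) / 2 = n by omega, show 2 * n / 2 = n by omega]
  · rw [sum_range_succ, heven, show (2 * n + 1 + 1) / 2 = n + 1 by omega,
      show (2 * n + 1) / 2 = n by omega, sum_range_succ (fun k => (x ^ 2) ^ k), ← pow_mul]
    ring

theorem LaurentPolynomial.T_mul_natCast {R : Type*} [Semiring R] (c : ℤ) (k : ℕ) :
    (T (c * k) : R[T;T⁻¹]) = T c ^ k := by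
  rw [T_pow, mul_comm]

theorem LaurentPolynomial.sum_Icc_T_mul {R : Type*} [Semiring R] (c : ℤ) (N : ℕ) :
    ∑ j ∈ Icc (0 : ℤ) N, (T (c * j) : R[T;T⁻¹]) = ∑ k ∈ range (N + 1), T c ^ k := by
  simp only [sum_Icc_zero_natCast, T_mul_natCast]

theorem stmt_12_general (a c : ℤ) (ha : 2 ≤ a) :
    (∑ p ∈ Finset.Icc (0 : ℤ) (a - 2) ×ˢ Finset.Icc (0 : ℤ) (a - 1),
        (T (c * (p.1 + p.2) - Int.ediv (p.1 - p.2) a) : LaurentPolynomial ℤ)) =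
      (1 + T (c + 1)) *
        (∑ j ∈ Finset.Icc (0 : ℤ) (2 * Int.ediv (a - 1) 2), T (c * j)) *
          (∑ j ∈ Finset.Icc (0 : ℤ) (Int.ediv a 2 - 1), T (2 * c * j)) := by
  simp only [← Int.div_def]
  obtain ⟨n, rfl⟩ : ∃ n : ℕ, a = n + 2 := ⟨(a - 2).toNat, by omega⟩
  have hpair : ∀ u ∈ Icc (0 : ℤ) n, ∀ v ∈ Icc 0 u,
      (T (c * (u + v) - (u - v) / (n + 2)) : ℤ[T;T⁻¹]) +
        T (c * (v + (u + 1)) - (v - (u + 1)) / (n + 2)) =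
      (1 + T (c + 1)) * (T (c * u) * T (c * v)) := by
    intro u hu v hv
    rw [mem_Icc] at hu hv
    rw [Int.sub_ediv_eq_ite (by omega) (by omega) (by omega) (by omega),
      Int.sub_ediv_eq_ite (by omega) (by omega) (by omega) (by omega), if_neg (by omega),
      if_pos (by omega), add_mul, one_mul, ← T_add, ← T_add]
    congr 2 <;> ring
  rw [show (n : ℤ) + 2 - 2 = n by ring, show (n : ℤ) + 2 - 1 = n + 1 by ring,
    sum_Icc_product_Icc_add_one, sum_congr rfl fun u hu => sum_congr rfl (hpair u hu),
    show 2 * (((n : ℤ) + 1) / 2) = ((2 * ((n + 1) / 2) : ℕ) : ℤ) by push_cast; omega,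
    show ((n : ℤ) + 2) / 2 - 1 = ((n / 2 : ℕ) : ℤ) by push_cast; omega]
  simp_rw [← mul_sum]
  rw [sum_Icc_zero_natCast]
  simp only [sum_Icc_T_mul, T_mul_natCast]
  rw [sum_range_pow_mul_sum_range_succ_pow, show (n + 1 + 1) / 2 = n / 2 + 1 by omega, mul_assoc,
    show (T (2 * c) : ℤ[T;T⁻¹]) = T c ^ 2 by rw [T_pow]; norm_num]

open LaurentPolynomial in
theorem stmt_12 (a c : ℤ) (ha : 2 ≤ a) (hc : 1 ≤ c) :
    (∑ p ∈ Finset.Icc (0 : ℤ) (a - 2) ×ˢ Finset.Icc (0 : ℤ) (a - 1),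
        (T (c * (p.1 + p.2) - Int.ediv (p.1 - p.2) a) : LaurentPolynomial ℤ)) =
      (1 + T (c + 1)) *
        (∑ j ∈ Finset.Icc (0 : ℤ) (2 * Int.ediv (a - 1) 2), T (c * j)) *
          (∑ j ∈ Finset.Icc (0 : ℤ) (Int.ediv a 2 - 1), T (2 * c * j)) :=
  stmt_12_general a c ha
end

section
/- Let a ≥ 2 and c ≥ 1 be integers. The sum over all pairs (i_1, i_2) with 0 ≤ i_1 ≤ a²-2 and 0 ≤ i_2 ≤ a-1 of z^{c·i_1 + (ac-1)·i_2 - floor((i_1-i_2)/a)} equals (sum_{j_1=0}^{a-1} z^{(ac-1)j_1})·(sum_{j_2=0}^{a} z^{c·j_2})·(sum_{j_3=0}^{a-2} z^{(ac+c-1)j_3}). -/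
/-!
Put `d = i₁ - i₂ = a m + s` with `0 ≤ s < a`, so that `m = ⌊d / a⌋`. The exponent becomes
`(ac - 1) m + c s + (ac + c - 1) i₂`, the same linear form that gives the exponent of a term
`(j₁, j₂, j₃)` of the expanded product. The triples `(m, s, i₂)` range over the box
`[-1, a - 1] × [0, a - 1] × [0, a - 1]` cut at its two ends: `m = -1` forces `s + i₂ ≥ a` and
`m = a - 1` forces `s + i₂ ≤ a - 2` (`divModImage`). A piecewise translation (`toBox`, inverse
`ofBox`) that fixes this linear form maps them bijectively onto the box
`[0, a - 1] × [0, a] × [0, a - 2]` of the product.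
-/

open Finset LaurentPolynomial

namespace FloorExponentSum

noncomputable def divModImage (a : ℤ) : Finset (ℤ × ℤ × ℤ) :=
  (Icc (-1) (a - 1) ×ˢ Icc 0 (a - 1) ×ˢ Icc 0 (a - 1)).filter fun t =>
    (t.1 = -1 → a ≤ t.2.1 + t.2.2) ∧ (t.1 = a - 1 → t.2.1 + t.2.2 ≤ a - 2)

def weight (a c : ℤ) (t : ℤ × ℤ × ℤ) : ℤ :=
  (a * c - 1) * t.1 + c * t.2.1 + (a * c + c - 1) * t.2.2

theorem mem_divModImage_iff {a m s k : ℤ} (hs : 0 ≤ s) (hsa : s < a) (hk : 0 ≤ k) (hka : k < a) :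
    (m, s, k) ∈ divModImage a ↔ 0 ≤ a * m + s + k ∧ a * m + s + k ≤ a ^ 2 - 2 := by
  simp only [divModImage, mem_filter, mem_product, mem_Icc]
  constructor
  · rintro ⟨⟨⟨hm₀, hm₁⟩, -, -⟩, hlow, hhigh⟩
    rcases (by omega : m = -1 ∨ m = a - 1 ∨ (0 ≤ m ∧ m ≤ a - 2)) with rfl | rfl | ⟨hm₀, hm₁⟩
    · constructor <;> nlinarith [hlow rfl]
    · constructor <;> nlinarith [hhigh rfl]
    · constructor <;> nlinarith
  · rintro ⟨hlow, hhigh⟩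
    have hm₀ : -1 ≤ m := by nlinarith
    have hm₁ : m ≤ a - 1 := by nlinarith
    refine ⟨⟨⟨hm₀, hm₁⟩, ⟨hs, by omega⟩, hk, by omega⟩, ?_, ?_⟩ <;> rintro rfl <;> nlinarith

theorem sum_box_eq_sum_divModImage {M : Type*} [AddCommMonoid M] {a : ℤ} (ha : 0 < a) (c : ℤ)
    (f : ℤ → M) :
    ∑ p ∈ Icc 0 (a ^ 2 - 2) ×ˢ Icc 0 (a - 1), f (c * p.1 + (a * c - 1) * p.2 - (p.1 - p.2) / a) =
      ∑ t ∈ divModImage a, f (weight a c t) := by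
  refine sum_nbij' (fun p => ((p.1 - p.2) / a, (p.1 - p.2) % a, p.2))
    (fun t => (a * t.1 + t.2.1 + t.2.2, t.2.2)) ?_ ?_ ?_ ?_ ?_
  · rintro ⟨i₁, i₂⟩ h
    simp only [mem_product, mem_Icc] at h
    have := Int.mul_ediv_add_emod (i₁ - i₂) a
    rw [mem_divModImage_iff (Int.emod_nonneg _ ha.ne') (Int.emod_lt_of_pos _ ha) h.2.1 (by omega)]
    constructor <;> linarith
  · rintro ⟨m, s, k⟩ h
    have hsk : (0 ≤ s ∧ s ≤ a - 1) ∧ 0 ≤ k ∧ k ≤ a - 1 := by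
      simp only [divModImage, mem_filter, mem_product, mem_Icc] at h
      exact h.1.2
    rw [mem_divModImage_iff hsk.1.1 (by omega) hsk.2.1 (by omega)] at h
    simp only [mem_product, mem_Icc]
    omega
  · rintro ⟨i₁, i₂⟩ -
    have := Int.mul_ediv_add_emod (i₁ - i₂) a
    simp only [Prod.mk.injEq, and_true]
    linarith
  · rintro ⟨m, s, k⟩ h
    simp only [divModImage, mem_filter, mem_product, mem_Icc] at h
    have := (Int.ediv_emod_unique (a := a * m + s) (r := s) (q := m) ha).2
      ⟨by ring, h.1.2.1.1, by omega⟩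
    simp only [Prod.mk.injEq, add_sub_cancel_right, and_true]
    exact this
  · rintro ⟨i₁, i₂⟩ -
    have := Int.mul_ediv_add_emod (i₁ - i₂) a
    simp only [weight]
    congr 1
    linear_combination (-c) * this

def toBox (a : ℤ) (t : ℤ × ℤ × ℤ) : ℤ × ℤ × ℤ :=
  let (m, s, k) := t
  if m = -1 then (a - 1 - s, a, k + s - a)
  else if k = a - 1 ∧ m < s then (m - s + a, a, s - 1)
  else if k = a - 1 then (a - 1, s - m + a - 1, m)
  else (m, s, k)

def ofBox (a : ℤ) (t : ℤ × ℤ × ℤ) : ℤ × ℤ × ℤ :=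
  let (j₁, j₂, j₃) := t
  if j₂ = a then
    if j₁ + j₃ ≤ a - 2 then (-1, a - 1 - j₁, j₁ + j₃ + 1)
    else (j₁ + j₃ + 1 - a, j₃ + 1, a - 1)
  else if j₁ = a - 1 ∧ a - 1 ≤ j₂ + j₃ then (j₃, j₂ + j₃ + 1 - a, a - 1)
  else (j₁, j₂, j₃)

theorem weight_toBox (a c : ℤ) (t : ℤ × ℤ × ℤ) : weight a c (toBox a t) = weight a c t := by
  obtain ⟨m, s, k⟩ := t
  simp only [toBox]
  split_ifs with hm hs hk
  · subst hm; simp only [weight]; ring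
  · rw [hs.1]; simp only [weight]; ring
  · subst hk; simp only [weight]; ring
  · rfl

theorem sum_divModImage_eq_sum_box {M : Type*} [AddCommMonoid M] (a c : ℤ) (f : ℤ → M) :
    ∑ t ∈ divModImage a, f (weight a c t) =
      ∑ t ∈ Icc 0 (a - 1) ×ˢ Icc 0 a ×ˢ Icc 0 (a - 2), f (weight a c t) := by
  refine sum_nbij' (toBox a) (ofBox a) ?_ ?_ ?_ ?_ ?_ <;> rintro ⟨m, s, k⟩ h <;>
    simp only [divModImage, mem_filter, mem_product, mem_Icc] at h
  · simp only [toBox]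
    split_ifs <;> simp only [mem_product, mem_Icc] <;> omega
  · simp only [ofBox]
    split_ifs <;> simp only [divModImage, mem_filter, mem_product, mem_Icc] <;> omega
  · simp only [toBox]
    split_ifs <;> simp only [ofBox] <;> split_ifs <;>
      simp only [Prod.mk.injEq, true_and] at * <;> omega
  · simp only [ofBox]
    split_ifs <;> simp only [toBox] <;> split_ifs <;>
      simp only [Prod.mk.injEq, true_and, and_true] at * <;> omega
  · rw [weight_toBox]

theorem sum_T_add_add_product {R ι κ μ : Type*} [CommSemiring R] (s : Finset ι) (t : Finset κ)
    (u : Finset μ) (f : ι → ℤ) (g : κ → ℤ) (h : μ → ℤ) :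
    ∑ p ∈ s ×ˢ t ×ˢ u, (T (f p.1 + g p.2.1 + h p.2.2) : R[T;T⁻¹]) =
      (∑ i ∈ s, T (f i)) * (∑ j ∈ t, T (g j)) * ∑ k ∈ u, T (h k) := by
  simp only [sum_product, T_add, mul_assoc, ← mul_sum, ← sum_mul]

end FloorExponentSum

open LaurentPolynomial in
theorem stmt_13_general (a c : ℤ) (ha : 2 ≤ a) :
    (∑ p ∈ Finset.Icc (0 : ℤ) (a ^ 2 - 2) ×ˢ Finset.Icc (0 : ℤ) (a - 1),
        (T (c * p.1 + (a * c - 1) * p.2 - Int.ediv (p.1 - p.2) a) :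
          LaurentPolynomial ℤ)) =
      (∑ j₁ ∈ Finset.Icc (0 : ℤ) (a - 1), T ((a * c - 1) * j₁)) *
        (∑ j₂ ∈ Finset.Icc (0 : ℤ) a, T (c * j₂)) *
          (∑ j₃ ∈ Finset.Icc (0 : ℤ) (a - 2), T ((a * c + c - 1) * j₃)) := by
  open FloorExponentSum in
  calc _ = ∑ t ∈ divModImage a, (T (weight a c t) : ℤ[T;T⁻¹]) :=
        sum_box_eq_sum_divModImage (by omega) c _
    _ = ∑ t ∈ Icc 0 (a - 1) ×ˢ Icc 0 a ×ˢ Icc 0 (a - 2), (T (weight a c t) : ℤ[T;T⁻¹]) :=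
        sum_divModImage_eq_sum_box a c _
    _ = _ := sum_T_add_add_product _ _ _ _ _ _

open LaurentPolynomial in
theorem stmt_13 (a c : ℤ) (ha : 2 ≤ a) (hc : 1 ≤ c) :
    (∑ p ∈ Finset.Icc (0 : ℤ) (a ^ 2 - 2) ×ˢ Finset.Icc (0 : ℤ) (a - 1),
        (T (c * p.1 + (a * c - 1) * p.2 - Int.ediv (p.1 - p.2) a) :
          LaurentPolynomial ℤ)) =
      (∑ j₁ ∈ Finset.Icc (0 : ℤ) (a - 1), T ((a * c - 1) * j₁)) *
        (∑ j₂ ∈ Finset.Icc (0 : ℤ) a, T (c * j₂)) *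
          (∑ j₃ ∈ Finset.Icc (0 : ℤ) (a - 2), T ((a * c + c - 1) * j₃)) :=
  stmt_13_general a c ha
end

section
/- Suppose a polynomial f(z) with non-negative integer coefficients factors as a product of geometric series f(z) = ∏_{j=1}^p (1 + z^{e_j} + z^{2e_j} + ... + z^{(γ_j - 1)e_j}) with e_j ≥ 1 and γ_j ≥ 2. Then for any j and any integer e ≥ e_j, the coefficients satisfy [z^{e - e_j}]f + [z^{e + e_j}]f ≥ [z^e]f. -/
/-!
Write `f = G * g`, where `G = 1 + y + ⋯ + y^(γ-1)` with `y = z^(e_j)` is the `j`-th factor and `g`,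
the product of the others, has non-negative coefficients. Since `γ ≥ 2`,
`(1 - y + y²) G = 1 + y² + ⋯ + y^(γ-1) + y^(γ+1)` has non-negative coefficients, hence so does
`(1 - y + y²) f`; its coefficient of `z^(e + e_j)` is `[z^(e + e_j)]f - [z^e]f + [z^(e - e_j)]f`.
-/

open Finset

namespace Polynomial

variable {R : Type*}

section NonnegCoeffs

variable (R) [Semiring R] [PartialOrder R] [IsOrderedRing R]

def nonnegCoeffs : Subsemiring R[X] where
  carrier := {p | ∀ n, 0 ≤ p.coeff n}
  zero_mem' n := by simp
  one_mem' n := by rw [coeff_one]; split <;> simp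
  add_mem' hp hq n := by rw [coeff_add]; exact add_nonneg (hp n) (hq n)
  mul_mem' hp hq n := by
    rw [coeff_mul]; exact sum_nonneg fun x _ ↦ mul_nonneg (hp _) (hq _)

variable {R}

theorem mem_nonnegCoeffs {p : R[X]} : p ∈ nonnegCoeffs R ↔ ∀ n, 0 ≤ p.coeff n := Iff.rfl

theorem X_pow_mem_nonnegCoeffs (k : ℕ) : (X ^ k : R[X]) ∈ nonnegCoeffs R :=
  mem_nonnegCoeffs.mpr fun n ↦ by rw [coeff_X_pow]; split <;> simp

end NonnegCoeffs

theorem one_sub_add_sq_mul_geom_sum [CommRing R] (y : R) (m : ℕ) :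
    (1 - y + y ^ 2) * ∑ i ∈ range (m + 2), y ^ i =
      1 + ∑ i ∈ range m, y ^ (i + 2) + y ^ (m + 3) := by
  induction m with
  | zero => simp only [sum_range_succ, sum_range_zero]; ring
  | succ m ih =>
    rw [sum_range_succ, mul_add, ih, sum_range_succ]
    ring

variable [CommRing R] [PartialOrder R] [IsOrderedRing R]

theorem one_sub_add_sq_mul_geom_sum_mem_nonnegCoeffs {γ : ℕ} (hγ : 2 ≤ γ) (d : ℕ) :
    (1 - X ^ d + (X ^ d) ^ 2) * ∑ i ∈ range γ, (X : R[X]) ^ (i * d) ∈ nonnegCoeffs R := by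
  obtain ⟨m, rfl⟩ := Nat.exists_eq_add_of_le' hγ
  simp_rw [pow_mul']
  rw [one_sub_add_sq_mul_geom_sum]
  have hy := X_pow_mem_nonnegCoeffs (R := R) d
  exact add_mem (add_mem (one_mem _) (sum_mem fun i _ ↦ pow_mem hy _)) (pow_mem hy _)

theorem coeff_le_coeff_sub_add_coeff_add_of_geom_sum_mul {γ d n : ℕ} (hγ : 2 ≤ γ) (hdn : d ≤ n)
    {f g : R[X]} (hg : g ∈ nonnegCoeffs R) (hf : f = (∑ i ∈ range γ, X ^ (i * d)) * g) :
    f.coeff n ≤ f.coeff (n - d) + f.coeff (n + d) := by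
  have hnonneg : (1 - X ^ d + (X ^ d) ^ 2) * f ∈ nonnegCoeffs R := by
    rw [hf, ← mul_assoc]
    exact mul_mem (one_sub_add_sq_mul_geom_sum_mem_nonnegCoeffs hγ d) hg
  have hcoeff := mem_nonnegCoeffs.mp hnonneg (n + d)
  rw [← pow_mul, add_mul, sub_mul, one_mul, coeff_add, coeff_sub, coeff_X_pow_mul',
    coeff_X_pow_mul', if_pos (by omega), if_pos (by omega), Nat.add_sub_cancel,
    show n + d - d * 2 = n - d by omega] at hcoeff
  exact sub_nonneg.mp (by convert hcoeff using 1; abel)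

end Polynomial

open Polynomial

theorem stmt_18_general (p : ℕ) (e γ : Fin p → ℕ)
    (hγ : ∀ j, 2 ≤ γ j)
    (f : Polynomial ℤ)
    (hf : f = ∏ j, ∑ i ∈ Finset.range (γ j), (Polynomial.X : Polynomial ℤ) ^ (i * e j)) :
    ∀ (j : Fin p) (e' : ℕ), e j ≤ e' →
      f.coeff e' ≤ f.coeff (e' - e j) + f.coeff (e' + e j) := by
  intro j e' hj
  refine coeff_le_coeff_sub_add_coeff_add_of_geom_sum_mul (hγ j) hj
    (g := ∏ k ∈ univ.erase j, ∑ i ∈ range (γ k), X ^ (i * e k)) ?_ ?_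
  · exact prod_mem fun k _ ↦ sum_mem fun i _ ↦ X_pow_mem_nonnegCoeffs (i * e k)
  · rw [hf, ← mul_prod_erase _ _ (mem_univ j)]

theorem stmt_18 (p : ℕ) (e γ : Fin p → ℕ)
    (he : ∀ j, 1 ≤ e j) (hγ : ∀ j, 2 ≤ γ j)
    (f : Polynomial ℤ)
    (hf : f = ∏ j, ∑ i ∈ Finset.range (γ j), (Polynomial.X : Polynomial ℤ) ^ (i * e j)) :
    ∀ (j : Fin p) (e' : ℕ), e j ≤ e' →
      f.coeff e' ≤ f.coeff (e' - e j) + f.coeff (e' + e j) :=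
  stmt_18_general p e γ hγ f hf
end
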